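/- arXiv:1903.06432 — 3 statements merged into one kernel-verified Lean document; each statement's English description precedes it below -/
import Mathlib

section
/- Let φ : ℝ^m → ℝ^n be a smooth map and define τ = Δφ (componentwise Laplacian, with the sign convention Δ = -∑∂_i²; either sign convention may be fixed consistently). Define the triharmonic stress-energy tensor S₃(i,j) = δ_{ij}((1/2)|∇τ|² - ⟨τ, Δτ⟩ - ∑_k ⟨∂_kφ, ∂_k Δτ⟩) - ⟨∂_i τ, ∂_j τ⟩ + ⟨∂_i φ, ∂_j Δτ⟩ + ⟨∂_j φ, ∂_i Δτ⟩. Then for every i, ∑_j ∂_j S₃(i,j) = -⟨Δ²τ, ∂_i φ⟩. In particular, if φ is triharmonic (Δ²τ = 0), then S₃ is divergence-free. -/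
open MeasureTheory

/-- The partial derivative in the `i`-th coordinate direction. -/
noncomputable def pd {m : ℕ} {E : Type*} [NormedAddCommGroup E] [NormedSpace ℝ E]
    (i : Fin m) (f : (Fin m → ℝ) → E) (x : Fin m → ℝ) : E :=
  fderiv ℝ f x (Pi.single i 1)

/-- Euclidean inner product on `Fin n → ℝ`. -/
def dot {n : ℕ} (v w : Fin n → ℝ) : ℝ := ∑ α, v α * w α

/-- The componentwise Laplacian `Δ = -∑ᵢ ∂ᵢ²` (geometer's sign convention) acting on
sections (here: maps `ℝ^m → ℝ^n`). -/
noncomputable def lap {m n : ℕ} (f : (Fin m → ℝ) → Fin n → ℝ) :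
    (Fin m → ℝ) → Fin n → ℝ :=
  fun x => -∑ i, pd i (pd i f) x

/-- The tension field of a map `ℝ^m → ℝ^n`: `τ(φ) = tr ∇dφ = ∑ᵢ ∂ᵢ²φ`. -/
noncomputable def tension {m n : ℕ} (f : (Fin m → ℝ) → Fin n → ℝ) :
    (Fin m → ℝ) → Fin n → ℝ :=
  fun x => ∑ i, pd i (pd i f) x

/-- The stress-energy tensor `S₃` of the trienergy for a map `φ : ℝ^m → ℝ^n`, with
`τ = Δφ` the tension field; the sign conventions for `τ` and for `Δ` acting on `τ`
are fixed consistently as in the paper. -/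
noncomputable def S3 {m n : ℕ} (φ : (Fin m → ℝ) → Fin n → ℝ)
    (i j : Fin m) (x : Fin m → ℝ) : ℝ :=
  (if i = j then (1 : ℝ) else 0) *
      ((1 / 2) * ∑ k, dot (pd k (tension φ) x) (pd k (tension φ) x)
        - dot (tension φ x) (lap (tension φ) x)
        - ∑ k, dot (pd k φ x) (pd k (lap (tension φ)) x))
    - dot (pd i (tension φ) x) (pd j (tension φ) x)
    + dot (pd i φ x) (pd j (lap (tension φ)) x)
    + dot (pd j φ x) (pd i (lap (tension φ)) x)

section helpers
variable {m n : ℕ} {E : Type*} [NormedAddCommGroup E] [NormedSpace ℝ E]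

lemma contDiff_pd {f : (Fin m → ℝ) → E} (hf : ContDiff ℝ (⊤ : ℕ∞) f) (i : Fin m) :
    ContDiff ℝ (⊤ : ℕ∞) (pd i f) :=
  ((hf.fderiv_right (by simp)).clm_apply contDiff_const)

lemma pd_sum {ι : Type*} (s : Finset ι) {f : ι → (Fin m → ℝ) → E} {x : Fin m → ℝ}
    (h : ∀ k ∈ s, DifferentiableAt ℝ (f k) x) (i : Fin m) :
    pd i (fun y => ∑ k ∈ s, f k y) x = ∑ k ∈ s, pd i (f k) x := by
  unfold pd; rw [fderiv_fun_sum h]; simp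

lemma pd_apply {f : (Fin m → ℝ) → Fin n → ℝ} {x : Fin m → ℝ}
    (hf : DifferentiableAt ℝ f x) (i : Fin m) (α : Fin n) :
    pd i (fun y => f y α) x = pd i f x α := by
  unfold pd
  have : (fun y => f y α) = (ContinuousLinearMap.proj (R := ℝ) (φ := fun _ : Fin n => ℝ) α) ∘ f := rfl
  rw [this, fderiv_comp x (ContinuousLinearMap.differentiableAt _) hf]
  simp

lemma diffAt_apply {f : (Fin m → ℝ) → Fin n → ℝ} {x : Fin m → ℝ}
    (hf : DifferentiableAt ℝ f x) (α : Fin n) :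
    DifferentiableAt ℝ (fun y => f y α) x :=
  ((ContinuousLinearMap.proj (R := ℝ) (φ := fun _ : Fin n => ℝ) α).differentiableAt).comp x hf

lemma pd_mul {f g : (Fin m → ℝ) → ℝ} {x : Fin m → ℝ}
    (hf : DifferentiableAt ℝ f x) (hg : DifferentiableAt ℝ g x) (i : Fin m) :
    pd i (fun y => f y * g y) x = pd i f x * g x + f x * pd i g x := by
  unfold pd; rw [fderiv_fun_mul hf hg]; simp [mul_comm]; ring

lemma pd_dot {f g : (Fin m → ℝ) → Fin n → ℝ} {x : Fin m → ℝ}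
    (hf : DifferentiableAt ℝ f x) (hg : DifferentiableAt ℝ g x) (i : Fin m) :
    pd i (fun y => dot (f y) (g y)) x = dot (pd i f x) (g x) + dot (f x) (pd i g x) := by
  unfold dot
  rw [pd_sum (f := fun α y => f y α * g y α) Finset.univ (fun α _ => (diffAt_apply hf α).mul (diffAt_apply hg α)) i,
    ← Finset.sum_add_distrib]
  refine Finset.sum_congr rfl fun α _ => ?_
  rw [pd_mul (diffAt_apply hf α) (diffAt_apply hg α), pd_apply hf, pd_apply hg]

lemma pd_comm {f : (Fin m → ℝ) → Fin n → ℝ} (hf : ContDiff ℝ (⊤ : ℕ∞) f) (i j : Fin m) (x : Fin m → ℝ) :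
    pd i (pd j f) x = pd j (pd i f) x := by
  have hd : DifferentiableAt ℝ (fderiv ℝ f) x :=
    ((hf.fderiv_right (m := (⊤ : ℕ∞)) (by simp)).differentiable (by simp)) x
  have h1 : ∀ a b : Fin m,
      pd a (pd b f) x = fderiv ℝ (fderiv ℝ f) x (Pi.single a 1) (Pi.single b 1) := by
    intro a b
    unfold pd
    rw [fderiv_clm_apply hd (differentiableAt_const _)]
    simp
  rw [h1, h1]
  exact second_derivative_symmetric (f := f)
    (fun y => ((hf.differentiable (by simp)) y).hasFDerivAt) hd.hasFDerivAt _ _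

lemma dot_comm (v w : Fin n → ℝ) : dot v w = dot w v := by
  unfold dot; exact Finset.sum_congr rfl fun α _ => mul_comm _ _

lemma dot_sum_right {ι : Type*} (s : Finset ι) (v : Fin n → ℝ) (w : ι → Fin n → ℝ) :
    dot v (∑ k ∈ s, w k) = ∑ k ∈ s, dot v (w k) := by
  simp only [dot, Finset.sum_apply, Finset.mul_sum]
  rw [Finset.sum_comm]

lemma dot_sum_left {ι : Type*} (s : Finset ι) (v : ι → Fin n → ℝ) (w : Fin n → ℝ) :
    dot (∑ k ∈ s, v k) w = ∑ k ∈ s, dot (v k) w := by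
  rw [dot_comm, dot_sum_right]; exact Finset.sum_congr rfl fun k _ => dot_comm _ _

lemma dot_neg_right (v w : Fin n → ℝ) : dot v (-w) = -dot v w := by
  simp [dot]

lemma pd_add {f g : (Fin m → ℝ) → E} {x : Fin m → ℝ}
    (hf : DifferentiableAt ℝ f x) (hg : DifferentiableAt ℝ g x) (i : Fin m) :
    pd i (fun y => f y + g y) x = pd i f x + pd i g x := by
  unfold pd; rw [fderiv_fun_add hf hg]; simp

lemma pd_sub {f g : (Fin m → ℝ) → E} {x : Fin m → ℝ}
    (hf : DifferentiableAt ℝ f x) (hg : DifferentiableAt ℝ g x) (i : Fin m) :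
    pd i (fun y => f y - g y) x = pd i f x - pd i g x := by
  unfold pd; rw [fderiv_fun_sub hf hg]; simp

lemma pd_const_mul {f : (Fin m → ℝ) → ℝ} {x : Fin m → ℝ}
    (hf : DifferentiableAt ℝ f x) (c : ℝ) (i : Fin m) :
    pd i (fun y => c * f y) x = c * pd i f x := by
  unfold pd; rw [fderiv_const_mul hf]; simp

lemma contDiff_dot {f g : (Fin m → ℝ) → Fin n → ℝ}
    (hf : ContDiff ℝ (⊤ : ℕ∞) f) (hg : ContDiff ℝ (⊤ : ℕ∞) g) :
    ContDiff ℝ (⊤ : ℕ∞) (fun y => dot (f y) (g y)) := by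
  unfold dot
  exact ContDiff.sum fun α _ => (contDiff_pi.mp hf α).mul (contDiff_pi.mp hg α)

lemma contDiff_tension {f : (Fin m → ℝ) → Fin n → ℝ} (hf : ContDiff ℝ (⊤ : ℕ∞) f) :
    ContDiff ℝ (⊤ : ℕ∞) (tension f) := by
  unfold tension
  exact ContDiff.sum fun k _ => contDiff_pd (contDiff_pd hf k) k

lemma contDiff_lap {f : (Fin m → ℝ) → Fin n → ℝ} (hf : ContDiff ℝ (⊤ : ℕ∞) f) :
    ContDiff ℝ (⊤ : ℕ∞) (lap f) := by
  unfold lap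
  exact (ContDiff.sum fun k _ => contDiff_pd (contDiff_pd hf k) k).neg

end helpers

lemma pd_S3 {m n : ℕ} (φ : (Fin m → ℝ) → Fin n → ℝ) (hφ : ContDiff ℝ (⊤ : ℕ∞) φ)
    (i j : Fin m) (x : Fin m → ℝ) :
    pd j (fun y => S3 φ i j y) x =
      (if i = j then (1 : ℝ) else 0) *
        ((1 / 2) * ∑ k, (dot (pd j (pd k (tension φ)) x) (pd k (tension φ) x)
              + dot (pd k (tension φ) x) (pd j (pd k (tension φ)) x))
          - (dot (pd j (tension φ) x) (lap (tension φ) x)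
              + dot (tension φ x) (pd j (lap (tension φ)) x))
          - ∑ k, (dot (pd j (pd k φ) x) (pd k (lap (tension φ)) x)
              + dot (pd k φ x) (pd j (pd k (lap (tension φ))) x)))
      - (dot (pd j (pd i (tension φ)) x) (pd j (tension φ) x)
          + dot (pd i (tension φ) x) (pd j (pd j (tension φ)) x))
      + (dot (pd j (pd i φ) x) (pd j (lap (tension φ)) x)
          + dot (pd i φ x) (pd j (pd j (lap (tension φ))) x))
      + (dot (pd j (pd j φ) x) (pd i (lap (tension φ)) x)
          + dot (pd j φ x) (pd j (pd i (lap (tension φ))) x)) := by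
  have hT : ContDiff ℝ (⊤ : ℕ∞) (tension φ) := contDiff_tension hφ
  have hU : ContDiff ℝ (⊤ : ℕ∞) (lap (tension φ)) := contDiff_lap hT
  have d : ∀ (f : (Fin m → ℝ) → Fin n → ℝ), ContDiff ℝ (⊤ : ℕ∞) f → ∀ (k : Fin m),
      DifferentiableAt ℝ (pd k f) x := fun f hf k => ((contDiff_pd hf k).differentiable (by simp)) x
  have cA1 : ContDiff ℝ (⊤ : ℕ∞) (fun y => ∑ k, dot (pd k (tension φ) y) (pd k (tension φ) y)) :=
    ContDiff.sum fun k _ => contDiff_dot (contDiff_pd hT k) (contDiff_pd hT k)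
  have cA2 : ContDiff ℝ (⊤ : ℕ∞) (fun y => dot (tension φ y) (lap (tension φ) y)) :=
    contDiff_dot hT hU
  have cA3 : ContDiff ℝ (⊤ : ℕ∞) (fun y => ∑ k, dot (pd k φ y) (pd k (lap (tension φ)) y)) :=
    ContDiff.sum fun k _ => contDiff_dot (contDiff_pd hφ k) (contDiff_pd hU k)
  have cA : ContDiff ℝ (⊤ : ℕ∞) (fun y => (1/2) * ∑ k, dot (pd k (tension φ) y) (pd k (tension φ) y)
      - dot (tension φ y) (lap (tension φ) y)
      - ∑ k, dot (pd k φ y) (pd k (lap (tension φ)) y)) :=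
    ((contDiff_const.mul cA1).sub cA2).sub cA3
  have cB : ContDiff ℝ (⊤ : ℕ∞) (fun y => dot (pd i (tension φ) y) (pd j (tension φ) y)) :=
    contDiff_dot (contDiff_pd hT i) (contDiff_pd hT j)
  have cC : ContDiff ℝ (⊤ : ℕ∞) (fun y => dot (pd i φ y) (pd j (lap (tension φ)) y)) :=
    contDiff_dot (contDiff_pd hφ i) (contDiff_pd hU j)
  have cD : ContDiff ℝ (⊤ : ℕ∞) (fun y => dot (pd j φ y) (pd i (lap (tension φ)) y)) :=
    contDiff_dot (contDiff_pd hφ j) (contDiff_pd hU i)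
  simp only [S3]
  rw [pd_add (((((contDiff_const.mul cA).sub cB).add cC).differentiable (by simp)) x)
      ((cD.differentiable (by simp)) x),
    pd_add ((((contDiff_const.mul cA).sub cB).differentiable (by simp)) x)
      ((cC.differentiable (by simp)) x),
    pd_sub (((contDiff_const.mul cA).differentiable (by simp)) x) ((cB.differentiable (by simp)) x),
    pd_const_mul ((cA.differentiable (by simp)) x),
    pd_sub (((contDiff_const.mul cA1).sub cA2).differentiable (by simp) x)
      ((cA3.differentiable (by simp)) x),
    pd_sub (((contDiff_const.mul cA1)).differentiable (by simp) x) ((cA2.differentiable (by simp)) x),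
    pd_const_mul ((cA1.differentiable (by simp)) x),
    pd_sum Finset.univ (fun k _ => ((contDiff_dot (contDiff_pd hT k) (contDiff_pd hT k)).differentiable (by simp)) x) j,
    pd_sum Finset.univ (fun k _ => ((contDiff_dot (contDiff_pd hφ k) (contDiff_pd hU k)).differentiable (by simp)) x) j,
    pd_dot (hT.differentiable (by simp) x) (hU.differentiable (by simp) x) j,
    pd_dot (d _ hT i) (d _ hT j) j,
    pd_dot (d _ hφ i) (d _ hU j) j,
    pd_dot (d _ hφ j) (d _ hU i) j,
    Finset.sum_congr rfl (fun k _ => pd_dot (d _ hT k) (d _ hT k) j),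
    Finset.sum_congr rfl (fun k _ => pd_dot (d _ hφ k) (d _ hU k) j)]

/-- Conservation law for the triharmonic stress-energy tensor (flat domain and target):
`div S₃ = -⟨Δ²τ, dφ⟩`; in particular `S₃` is divergence-free whenever `φ` is
triharmonic, i.e. `Δ²τ = 0`. -/
theorem div_S3 {m n : ℕ} (φ : (Fin m → ℝ) → Fin n → ℝ) (hφ : ContDiff ℝ (⊤ : ℕ∞) φ) :
    (∀ i x, ∑ j, pd j (fun y => S3 φ i j y) x
      = -dot (lap (lap (tension φ)) x) (pd i φ x)) ∧
    ((∀ x, lap (lap (tension φ)) x = 0) →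
      ∀ i x, ∑ j, pd j (fun y => S3 φ i j y) x = 0) := by
  have hT : ContDiff ℝ (⊤ : ℕ∞) (tension φ) := contDiff_tension hφ
  have hU : ContDiff ℝ (⊤ : ℕ∞) (lap (tension φ)) := contDiff_lap hT
  have main : ∀ i x, ∑ j, pd j (fun y => S3 φ i j y) x
      = -dot (lap (lap (tension φ)) x) (pd i φ x) := by
    intro i x
    rw [Finset.sum_congr rfl (fun j _ => pd_S3 φ hφ i j x)]
    simp only [Finset.sum_add_distrib, Finset.sum_sub_distrib, ite_mul, one_mul, zero_mul,
      Finset.sum_ite_eq, Finset.mem_univ, if_true]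
    have e1 : ∑ j, pd j (pd j (tension φ)) x = -(lap (tension φ) x) := by simp [lap]
    have e2 : ∑ j, pd j (pd j (lap (tension φ))) x = -(lap (lap (tension φ)) x) := by simp [lap]
    have e3 : ∑ j, pd j (pd j φ) x = tension φ x := rfl
    have hW1 : ∑ k, dot (pd k (tension φ) x) (pd i (pd k (tension φ)) x)
        = ∑ k, dot (pd i (pd k (tension φ)) x) (pd k (tension φ) x) :=
      Finset.sum_congr rfl fun k _ => dot_comm _ _
    have hX1 : ∑ j, dot (pd j (pd i (tension φ)) x) (pd j (tension φ) x)
        = ∑ j, dot (pd i (pd j (tension φ)) x) (pd j (tension φ) x) :=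
      Finset.sum_congr rfl fun j _ => by rw [pd_comm hT j i]
    have hX2 : ∑ j, dot (pd i (tension φ) x) (pd j (pd j (tension φ)) x)
        = -dot (pd i (tension φ) x) (lap (tension φ) x) := by
      rw [← dot_sum_right, e1, dot_neg_right]
    have hY1 : ∑ j, dot (pd j (pd i φ) x) (pd j (lap (tension φ)) x)
        = ∑ j, dot (pd i (pd j φ) x) (pd j (lap (tension φ)) x) :=
      Finset.sum_congr rfl fun j _ => by rw [pd_comm hφ j i]
    have hY2 : ∑ j, dot (pd i φ x) (pd j (pd j (lap (tension φ))) x)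
        = -dot (pd i φ x) (lap (lap (tension φ)) x) := by
      rw [← dot_sum_right, e2, dot_neg_right]
    have hZ1 : ∑ j, dot (pd j (pd j φ) x) (pd i (lap (tension φ)) x)
        = dot (tension φ x) (pd i (lap (tension φ)) x) := by
      rw [← dot_sum_left, e3]
    have hZ2 : ∑ j, dot (pd j φ x) (pd j (pd i (lap (tension φ))) x)
        = ∑ j, dot (pd j φ x) (pd i (pd j (lap (tension φ))) x) :=
      Finset.sum_congr rfl fun j _ => by rw [pd_comm hU j i]
    rw [hW1, hX1, hX2, hY1, hY2, hZ1, hZ2, dot_comm (lap (lap (tension φ)) x) (pd i φ x)]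
    ring
  refine ⟨main, fun h i x => ?_⟩
  rw [main i x, h x]
  simp [dot]
end

section
/- Let φ : ℝ^m → ℝ^n be smooth and compactly supported (or more generally all boundary terms vanish), let s ≥ 1, and set τ = Δφ with Δ = -∑_k ∂_k². Define tr S_{2s} = (m/2)|Δ^{s-1}τ|² + (2-m)∑_k⟨∂_kφ, ∂_kΔ^{2s-2}τ⟩ - m⟨τ, Δ^{2s-2}τ⟩ - m∑_{l=1}^{s-1}⟨Δ^{s-l}τ, Δ^{s+l-2}τ⟩ + (m-2)∑_{l=1}^{s-1}∑_k⟨∂_kΔ^{s-l-1}τ, ∂_kΔ^{s+l-2}τ⟩. Then ∫_{ℝ^m} tr S_{2s} dx = (m/2 - 2s) ∫_{ℝ^m} |Δ^{s-1}τ|² dx. -/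
open MeasureTheory

namespace ITSE

variable {m n : ℕ}

/-- Smooth with compact support. -/
def Nice {E : Type*} [NormedAddCommGroup E] [NormedSpace ℝ E]
    (f : (Fin m → ℝ) → E) : Prop :=
  ContDiff ℝ (⊤ : ℕ∞) f ∧ HasCompactSupport f

variable {E : Type*} [NormedAddCommGroup E] [NormedSpace ℝ E]

lemma nicePd {f : (Fin m → ℝ) → E} (hf : Nice f) (i : Fin m) : Nice (pd i f) :=
  ⟨(hf.1.fderiv_right (by simp)).clm_apply contDiff_const,
   hf.2.fderiv_apply ℝ (Pi.single i 1)⟩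

lemma hcs_sum {ι : Type*} (s : Finset ι) (f : ι → (Fin m → ℝ) → E)
    (h : ∀ i ∈ s, HasCompactSupport (f i)) :
    HasCompactSupport (fun x => ∑ i ∈ s, f i x) := by
  classical
  induction s using Finset.induction with
  | empty => exact HasCompactSupport.intro isCompact_empty (by simp)
  | insert _ _ hi ih =>
      simp only [Finset.sum_insert hi]
      exact (h _ (Finset.mem_insert_self _ _)).add
        (ih fun i hi' => h i (Finset.mem_insert_of_mem hi'))

lemma hcs_neg {g : (Fin m → ℝ) → E} (h : HasCompactSupport g) :
    HasCompactSupport (fun x => -g x) :=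
  h.mono (fun x hx => by
    simp only [Function.mem_support] at hx ⊢
    intro h0; exact hx (by simp [h0]))

lemma niceLap {f : (Fin m → ℝ) → Fin n → ℝ} (hf : Nice f) : Nice (lap f) := by
  have h2 : ∀ i : Fin m, Nice (pd i (pd i f)) := fun i => nicePd (nicePd hf i) i
  constructor
  · unfold lap
    exact (ContDiff.sum (fun i _ => (h2 i).1)).neg
  · unfold lap
    exact hcs_neg (hcs_sum Finset.univ (fun i => pd i (pd i f)) fun i _ => (h2 i).2)

lemma niceTension {f : (Fin m → ℝ) → Fin n → ℝ} (hf : Nice f) : Nice (tension f) := by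
  have h2 : ∀ i : Fin m, Nice (pd i (pd i f)) := fun i => nicePd (nicePd hf i) i
  constructor
  · unfold tension
    exact ContDiff.sum fun i _ => (h2 i).1
  · unfold tension
    exact hcs_sum Finset.univ (fun i => pd i (pd i f)) fun i _ => (h2 i).2

lemma niceLap_iter {f : (Fin m → ℝ) → Fin n → ℝ} (hf : Nice f) (a : ℕ) :
    Nice (lap^[a] f) := by
  induction a with
  | zero => exact hf
  | succ a ih => rw [Function.iterate_succ_apply']; exact niceLap ih

lemma niceComp {f : (Fin m → ℝ) → Fin n → ℝ} (hf : Nice f) (α : Fin n) :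
    Nice (fun x => f x α) :=
  ⟨contDiff_pi.mp hf.1 α, hf.2.comp_left (g := fun v : Fin n → ℝ => v α) rfl⟩

lemma pd_apply {f : (Fin m → ℝ) → Fin n → ℝ} (hf : Differentiable ℝ f)
    (k : Fin m) (x : Fin m → ℝ) (α : Fin n) :
    pd k f x α = pd k (fun y => f y α) x := by
  have h2 : HasFDerivAt (fun y => f y α)
      ((ContinuousLinearMap.proj (R := ℝ) (φ := fun _ : Fin n => ℝ) α).comp
        (fderiv ℝ f x)) x := by
    exact (ContinuousLinearMap.proj α).hasFDerivAt.comp x (hf x).hasFDerivAt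
  rw [pd, pd, h2.fderiv]; rfl

lemma dot_comm {v w : Fin n → ℝ} : dot v w = dot w v := by
  simp [dot, mul_comm]

lemma integrable_dot {f g : (Fin m → ℝ) → Fin n → ℝ}
    (hf : Nice f) (hg : Nice g) :
    Integrable (fun x => dot (f x) (g x)) := by
  apply Continuous.integrable_of_hasCompactSupport
  · exact continuous_finset_sum _ fun α _ =>
      ((continuous_apply α).comp hf.1.continuous).mul
      ((continuous_apply α).comp hg.1.continuous)
  · have hsub : Function.support (fun x => dot (f x) (g x)) ⊆ Function.support f := by
      intro x hx
      simp only [Function.mem_support, Ne] at hx ⊢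
      intro h0
      exact hx (by simp [dot, h0])
    exact HasCompactSupport.mono hf.2 hsub



lemma integrable_mul {f g : (Fin m → ℝ) → ℝ} (hf : Nice f) (hg : Nice g) :
    Integrable (fun x => f x * g x) := by
  apply Continuous.integrable_of_hasCompactSupport (hf.1.continuous.mul hg.1.continuous)
  exact hf.2.mul_right

lemma ibp_scalar {f g : (Fin m → ℝ) → ℝ} (hf : Nice f) (hg : Nice g) (k : Fin m) :
    ∫ x, f x * pd k g x = - ∫ x, pd k f x * g x := by
  have h1 : Integrable (fun x => pd k f x * g x) := integrable_mul (nicePd hf k) hg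
  have h2 : Integrable (fun x => f x * pd k g x) := integrable_mul hf (nicePd hg k)
  have h3 : Integrable (fun x => f x * g x) := integrable_mul hf hg
  exact integral_mul_fderiv_eq_neg_fderiv_mul_of_integrable h1 h2 h3
    (fun x _ => (hf.1.differentiable (by simp)) x) (fun x _ => (hg.1.differentiable (by simp)) x)

lemma ibp {f g : (Fin m → ℝ) → Fin n → ℝ} (hf : Nice f) (hg : Nice g) (k : Fin m) :
    ∫ x, dot (f x) (pd k g x) = - ∫ x, dot (pd k f x) (g x) := by
  have hfd := hf.1.differentiable (by simp)
  have hgd := hg.1.differentiable (by simp)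
  calc ∫ x, dot (f x) (pd k g x)
      = ∫ x, ∑ α, f x α * pd k (fun y => g y α) x := by
        congr 1; funext x
        simp only [dot]
        exact Finset.sum_congr rfl fun α _ => by rw [pd_apply hgd k x α]
    _ = ∑ α, ∫ x, f x α * pd k (fun y => g y α) x :=
        integral_finset_sum _ fun α _ =>
          integrable_mul (niceComp hf α) (nicePd (niceComp hg α) k)
    _ = ∑ α, - ∫ x, pd k (fun y => f y α) x * g x α := by
        exact Finset.sum_congr rfl fun α _ =>
          ibp_scalar (niceComp hf α) (niceComp hg α) k
    _ = - ∑ α, ∫ x, pd k (fun y => f y α) x * g x α := by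
        rw [Finset.sum_neg_distrib]
    _ = - ∫ x, ∑ α, pd k (fun y => f y α) x * g x α := by
        rw [integral_finset_sum _ fun α _ =>
          integrable_mul (nicePd (niceComp hf α) k) (niceComp hg α)]
    _ = - ∫ x, dot (pd k f x) (g x) := by
        have : (fun x => ∑ α, pd k (fun y => f y α) x * g x α)
            = fun x => dot (pd k f x) (g x) := by
          funext x
          simp only [dot]
          exact Finset.sum_congr rfl fun α _ => by rw [pd_apply hfd k x α]
        rw [this]

lemma dot_lap_left {f g : (Fin m → ℝ) → Fin n → ℝ} (x : Fin m → ℝ) :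
    dot (lap f x) (g x) = -∑ i, dot (pd i (pd i f) x) (g x) := by
  simp only [lap, dot, Pi.neg_apply, Finset.sum_apply, neg_mul, Finset.sum_mul,
    Finset.sum_neg_distrib]
  rw [Finset.sum_comm]

lemma sum_pd_dot {f g : (Fin m → ℝ) → Fin n → ℝ} (hf : Nice f) (hg : Nice g) :
    ∑ k, ∫ x, dot (pd k f x) (pd k g x) = ∫ x, dot (lap f x) (g x) := by
  calc ∑ k, ∫ x, dot (pd k f x) (pd k g x)
      = ∑ k, - ∫ x, dot (pd k (pd k f) x) (g x) :=
        Finset.sum_congr rfl fun k _ => ibp (nicePd hf k) hg k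
    _ = - ∑ k, ∫ x, dot (pd k (pd k f) x) (g x) := by rw [Finset.sum_neg_distrib]
    _ = - ∫ x, ∑ k, dot (pd k (pd k f) x) (g x) := by
        rw [integral_finset_sum _ fun k _ =>
          integrable_dot (nicePd (nicePd hf k) k) hg]
    _ = ∫ x, - ∑ k, dot (pd k (pd k f) x) (g x) := (integral_neg _).symm
    _ = ∫ x, dot (lap f x) (g x) := by
        congr 1; funext x; rw [dot_lap_left]

lemma lap_adj {f g : (Fin m → ℝ) → Fin n → ℝ} (hf : Nice f) (hg : Nice g) :
    ∫ x, dot (lap f x) (g x) = ∫ x, dot (f x) (lap g x) := by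
  have e1 : (fun x => dot (f x) (lap g x)) = fun x => dot (lap g x) (f x) :=
    funext fun x => dot_comm
  calc ∫ x, dot (lap f x) (g x)
      = ∑ k, ∫ x, dot (pd k f x) (pd k g x) := (sum_pd_dot hf hg).symm
    _ = ∑ k, ∫ x, dot (pd k g x) (pd k f x) := by
        exact Finset.sum_congr rfl fun k _ => by
          congr 1; funext x; exact dot_comm
    _ = ∫ x, dot (lap g x) (f x) := sum_pd_dot hg hf
    _ = ∫ x, dot (f x) (lap g x) := by rw [e1]

lemma pair_eq {F : (Fin m → ℝ) → Fin n → ℝ} (hF : Nice F) :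
    ∀ a b : ℕ, ∫ x, dot (lap^[a] F x) (lap^[b] F x)
      = ∫ x, dot (F x) (lap^[a + b] F x) := by
  intro a
  induction a with
  | zero => intro b; simp
  | succ a ih =>
      intro b
      have h1 : lap^[a + 1] F = lap (lap^[a] F) := Function.iterate_succ_apply' _ _ _
      have h2 : lap^[b + 1] F = lap (lap^[b] F) := Function.iterate_succ_apply' _ _ _
      have h3 : a + 1 + b = a + (b + 1) := by omega
      rw [h1, lap_adj (niceLap_iter hF a) (niceLap_iter hF b), ← h2, ih (b + 1), h3]

lemma dot_neg_left {v w : Fin n → ℝ} : dot (-v) w = -(dot v w) := by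
  simp [dot, Finset.sum_neg_distrib]

lemma lap_eq_neg_tension {f : (Fin m → ℝ) → Fin n → ℝ} (x : Fin m → ℝ) :
    lap f x = -(tension f x) := by
  simp [lap, tension]

end ITSE


open ITSE

/-- Integrated trace of the even-order stress-energy tensor in flat space:
`∫ tr S_{2s} = (m/2 - 2s) ∫ |Δ^{s-1}τ|²`, where `τ = Δφ` is the tension field. -/
theorem integral_trace_S_even {m n : ℕ} (φ : (Fin m → ℝ) → Fin n → ℝ)
    (hφ : ContDiff ℝ (⊤ : ℕ∞) φ) (hsupp : HasCompactSupport φ)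
    (s : ℕ) (hs : 1 ≤ s) :
    (∫ x,
      ((m : ℝ) / 2) * dot (lap^[s - 1] (tension φ) x) (lap^[s - 1] (tension φ) x)
      + (2 - (m : ℝ)) *
          ∑ k, dot (pd k φ x) (pd k (lap^[2 * s - 2] (tension φ)) x)
      - (m : ℝ) * dot (tension φ x) (lap^[2 * s - 2] (tension φ) x)
      - (m : ℝ) * ∑ l ∈ Finset.Icc 1 (s - 1),
          dot (lap^[s - l] (tension φ) x) (lap^[s + l - 2] (tension φ) x)
      + ((m : ℝ) - 2) * ∑ l ∈ Finset.Icc 1 (s - 1), ∑ k,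
          dot (pd k (lap^[s - l - 1] (tension φ)) x)
              (pd k (lap^[s + l - 2] (tension φ)) x))
    = ((m : ℝ) / 2 - 2 * s) *
        ∫ x, dot (lap^[s - 1] (tension φ) x) (lap^[s - 1] (tension φ) x) := by
  have hφn : Nice φ := ⟨hφ, hsupp⟩
  set F := tension φ with hFdef
  have hF : Nice F := niceTension hφn
  have hIter : ∀ a : ℕ, Nice (lap^[a] F) := niceLap_iter hF
  set G := lap^[2 * s - 2] F with hGdef
  have hG : Nice G := hIter _
  set J := ∫ x, dot (F x) (G x) with hJdef
  -- the five integrands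
  set A := fun x => dot (lap^[s - 1] F x) (lap^[s - 1] F x) with hAdef
  set B := fun x => ∑ k, dot (pd k φ x) (pd k G x) with hBdef
  set C := fun x => dot (F x) (G x) with hCdef
  set D := fun x => ∑ l ∈ Finset.Icc 1 (s - 1),
      dot (lap^[s - l] F x) (lap^[s + l - 2] F x) with hDdef
  set E := fun x => ∑ l ∈ Finset.Icc 1 (s - 1), ∑ k,
      dot (pd k (lap^[s - l - 1] F) x) (pd k (lap^[s + l - 2] F) x) with hEdef
  -- integrability
  have iA : Integrable A := integrable_dot (hIter _) (hIter _)
  have iB : Integrable B :=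
    integrable_finset_sum _ fun k _ => integrable_dot (nicePd hφn k) (nicePd hG k)
  have iC : Integrable C := integrable_dot hF hG
  have iD : Integrable D :=
    integrable_finset_sum _ fun l _ => integrable_dot (hIter _) (hIter _)
  have iE : Integrable E :=
    integrable_finset_sum _ fun l _ =>
      integrable_finset_sum _ fun k _ =>
        integrable_dot (nicePd (hIter _) k) (nicePd (hIter _) k)
  -- values of the five integrals
  have hA : ∫ x, A x = J := by
    rw [hAdef]
    rw [pair_eq hF (s - 1) (s - 1)]
    have e : s - 1 + (s - 1) = 2 * s - 2 := by omega
    rw [e]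
  have hB : ∫ x, B x = -J := by
    rw [hBdef]
    rw [integral_finset_sum _ fun k _ => integrable_dot (nicePd hφn k) (nicePd hG k)]
    rw [sum_pd_dot hφn hG]
    have e : (fun x => dot (lap φ x) (G x)) = fun x => -(dot (F x) (G x)) := by
      funext x
      rw [lap_eq_neg_tension, ← hFdef, dot_neg_left]
    rw [e, integral_neg]
  have hC : ∫ x, C x = J := rfl
  have hDl : ∀ l ∈ Finset.Icc 1 (s - 1),
      ∫ x, dot (lap^[s - l] F x) (lap^[s + l - 2] F x) = J := by
    intro l hl
    rw [Finset.mem_Icc] at hl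
    rw [pair_eq hF (s - l) (s + l - 2)]
    have e : s - l + (s + l - 2) = 2 * s - 2 := by omega
    rw [e]
  have hD : ∫ x, D x = ((s : ℝ) - 1) * J := by
    rw [hDdef]
    rw [integral_finset_sum _ fun l _ => integrable_dot (hIter _) (hIter _)]
    rw [Finset.sum_congr rfl hDl, Finset.sum_const, Nat.card_Icc]
    have e : s - 1 + 1 - 1 = s - 1 := by omega
    rw [e, nsmul_eq_mul, Nat.cast_sub hs, Nat.cast_one]
  have hEl : ∀ l ∈ Finset.Icc 1 (s - 1),
      ∑ k, ∫ x, dot (pd k (lap^[s - l - 1] F) x) (pd k (lap^[s + l - 2] F) x) = J := by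
    intro l hl
    rw [Finset.mem_Icc] at hl
    rw [sum_pd_dot (hIter _) (hIter _)]
    have e1 : lap (lap^[s - l - 1] F) = lap^[s - l] F := by
      conv_rhs => rw [show s - l = (s - l - 1) + 1 from by omega,
        Function.iterate_succ_apply']
    rw [e1, pair_eq hF (s - l) (s + l - 2)]
    have e : s - l + (s + l - 2) = 2 * s - 2 := by omega
    rw [e]
  have hE : ∫ x, E x = ((s : ℝ) - 1) * J := by
    rw [hEdef]
    rw [integral_finset_sum _ fun l _ =>
      integrable_finset_sum _ fun k _ =>
        integrable_dot (nicePd (hIter _) k) (nicePd (hIter _) k)]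
    have : ∀ l ∈ Finset.Icc 1 (s - 1),
        (∫ x, ∑ k, dot (pd k (lap^[s - l - 1] F) x) (pd k (lap^[s + l - 2] F) x)) = J := by
      intro l hl
      rw [integral_finset_sum _ fun k _ =>
        integrable_dot (nicePd (hIter _) k) (nicePd (hIter _) k)]
      exact hEl l hl
    rw [Finset.sum_congr rfl this, Finset.sum_const, Nat.card_Icc]
    have e : s - 1 + 1 - 1 = s - 1 := by omega
    rw [e, nsmul_eq_mul, Nat.cast_sub hs, Nat.cast_one]
  -- split the integral
  have i1 : Integrable (fun x => ((m : ℝ) / 2) * A x) := iA.const_mul _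
  have i2 : Integrable (fun x => (2 - (m : ℝ)) * B x) := iB.const_mul _
  have i3 : Integrable (fun x => (m : ℝ) * C x) := iC.const_mul _
  have i4 : Integrable (fun x => (m : ℝ) * D x) := iD.const_mul _
  have i5 : Integrable (fun x => ((m : ℝ) - 2) * E x) := iE.const_mul _
  have i12 : Integrable (fun x => ((m : ℝ) / 2) * A x + (2 - (m : ℝ)) * B x) := i1.add i2
  have i123 : Integrable (fun x => ((m : ℝ) / 2) * A x + (2 - (m : ℝ)) * B x
      - (m : ℝ) * C x) := i12.sub i3
  have i1234 : Integrable (fun x => ((m : ℝ) / 2) * A x + (2 - (m : ℝ)) * B x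
      - (m : ℝ) * C x - (m : ℝ) * D x) := i123.sub i4
  rw [integral_add i1234 i5, integral_sub i123 i4, integral_sub i12 i3,
    integral_add i1 i2, integral_const_mul _ _, integral_const_mul _ _,
    integral_const_mul _ _, integral_const_mul _ _, integral_const_mul _ _,
    hA, hB, hC, hD, hE]
  ring
end

section
/- Let φ : ℝ^m → ℝ^n be smooth and compactly supported, s ≥ 1, τ = Δφ. Suppose the flat odd-order trace identity holds: ∫_{ℝ^m} tr S_{2s+1} dx = (m/2 - 2s - 1) ∫_{ℝ^m} |∇Δ^{s-1}τ|² dx, where tr S_{2s+1} = (m/2 - 1)|∇Δ^{s-1}τ|² + (2-m)∑_k⟨∂_kφ, ∂_kΔ^{2s-1}τ⟩ - m⟨τ, Δ^{2s-1}τ⟩ - m∑_{l=1}^{s-1}⟨Δ^{s-l}τ, Δ^{s+l-1}τ⟩ + (m-2)∑_{l=1}^{s-1}∑_k⟨∂_kΔ^{s-l-1}τ, ∂_kΔ^{s+l-1}τ⟩. Prove this identity. -/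
open MeasureTheory

namespace TraceAux

variable {m n : ℕ}

/-- Smooth and compactly supported. -/
def Nice {E : Type*} [NormedAddCommGroup E] [NormedSpace ℝ E]
    (f : (Fin m → ℝ) → E) : Prop := ContDiff ℝ (⊤ : ℕ∞) f ∧ HasCompactSupport f

section E
variable {E : Type*} [NormedAddCommGroup E] [NormedSpace ℝ E]

lemma nice_pd {f : (Fin m → ℝ) → E} (hf : Nice f) (i : Fin m) : Nice (pd i f) :=
  ⟨(hf.1.fderiv_right (by simp)).clm_apply contDiff_const,
   (hf.2.fderiv ℝ).comp_left (g := fun L : (Fin m → ℝ) →L[ℝ] E => L (Pi.single i 1)) rfl⟩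

lemma nice_neg {f : (Fin m → ℝ) → E} (hf : Nice f) : Nice (fun x => -f x) :=
  ⟨hf.1.neg, hf.2.neg⟩

lemma nice_sum {ι : Type*} (t : Finset ι) (g : ι → (Fin m → ℝ) → E)
    (h : ∀ i ∈ t, Nice (g i)) : Nice (fun x => ∑ i ∈ t, g i x) := by
  classical
  induction t using Finset.induction with
  | empty => exact ⟨by simpa using contDiff_const, by simpa [Pi.zero_def] using HasCompactSupport.zero⟩
  | @insert a t' hx ih =>
    have h1 := h a (Finset.mem_insert_self a t')
    have h2 := ih fun i hi => h i (Finset.mem_insert_of_mem hi)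
    refine ⟨?_, ?_⟩
    · simpa [Finset.sum_insert hx] using h1.1.add h2.1
    · have := h1.2.add h2.2
      simpa [Finset.sum_insert hx, Pi.add_def] using this
end E

lemma nice_tension {f : (Fin m → ℝ) → Fin n → ℝ} (hf : Nice f) : Nice (tension f) :=
  nice_sum Finset.univ (fun i => pd i (pd i f)) (fun i _ => nice_pd (nice_pd hf i) i)

lemma nice_lap {f : (Fin m → ℝ) → Fin n → ℝ} (hf : Nice f) : Nice (lap f) := by
  have := nice_neg (nice_tension hf)
  exact this

lemma nice_lap_iter {f : (Fin m → ℝ) → Fin n → ℝ} (hf : Nice f) (j : ℕ) :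
    Nice (lap^[j] f) := by
  induction j with
  | zero => exact hf
  | succ j ih => rw [Function.iterate_succ_apply']; exact nice_lap ih

lemma nice_eval {f : (Fin m → ℝ) → Fin n → ℝ} (hf : Nice f) (α : Fin n) :
    Nice (fun x => f x α) := by
  constructor
  · exact (ContinuousLinearMap.proj (R := ℝ) (φ := fun _ : Fin n => ℝ) α).contDiff.comp hf.1
  · exact hf.2.comp_left (g := fun v => v α) rfl

lemma pd_eval {f : (Fin m → ℝ) → Fin n → ℝ} (hf : Nice f) (i : Fin m) (α : Fin n)
    (x : Fin m → ℝ) : pd i f x α = pd i (fun y => f y α) x := by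
  have hd : HasFDerivAt f (fderiv ℝ f x) x :=
    ((hf.1.differentiable (by simp)) x).hasFDerivAt
  have h2 : HasFDerivAt (fun y => f y α)
      ((ContinuousLinearMap.proj (R := ℝ) (φ := fun _ : Fin n => ℝ) α).comp (fderiv ℝ f x)) x :=
    (ContinuousLinearMap.proj (R := ℝ) (φ := fun _ : Fin n => ℝ) α).hasFDerivAt.comp x hd
  simp [pd, h2.fderiv]

lemma nice_mul_integrable {f g : (Fin m → ℝ) → ℝ} (hf : Nice f) (hg : Nice g) :
    Integrable (fun x => f x * g x) :=
  (hf.1.continuous.mul hg.1.continuous).integrable_of_hasCompactSupport (hf.2.mul_right)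

lemma nice_dot_integrable {f g : (Fin m → ℝ) → Fin n → ℝ} (hf : Nice f) (hg : Nice g) :
    Integrable (fun x => dot (f x) (g x)) := by
  simp only [dot]
  exact integrable_finset_sum _ fun α _ =>
    nice_mul_integrable (nice_eval hf α) (nice_eval hg α)

lemma ibp_scalar {f g : (Fin m → ℝ) → ℝ} (hf : Nice f) (hg : Nice g) (k : Fin m) :
    ∫ x, pd k f x * g x = - ∫ x, f x * pd k g x := by
  have h := integral_mul_fderiv_eq_neg_fderiv_mul_of_integrable (μ := volume)
    (f := g) (g := f) (v := Pi.single k 1)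
    (nice_mul_integrable (nice_pd hg k) hf)
    (nice_mul_integrable hg (nice_pd hf k))
    (nice_mul_integrable hg hf)
    (fun x _ => hg.1.differentiable (by simp) x) (fun x _ => hf.1.differentiable (by simp) x)
  -- h : ∫ g * f' = - ∫ g' * f
  calc ∫ x, pd k f x * g x = ∫ x, g x * fderiv ℝ f x (Pi.single k 1) := by
        simp only [pd]; congr 1; ext x; ring
    _ = - ∫ x, fderiv ℝ g x (Pi.single k 1) * f x := h
    _ = - ∫ x, f x * pd k g x := by
        simp only [pd]; congr 1; congr 1; ext x; ring

lemma ibp_dot {f g : (Fin m → ℝ) → Fin n → ℝ} (hf : Nice f) (hg : Nice g) (k : Fin m) :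
    ∫ x, dot (pd k f x) (g x) = - ∫ x, dot (f x) (pd k g x) := by
  have e1 : ∀ x, dot (pd k f x) (g x) = ∑ α, pd k (fun y => f y α) x * g x α := by
    intro x; simp [dot, pd_eval hf]
  have e2 : ∀ x, dot (f x) (pd k g x) = ∑ α, f x α * pd k (fun y => g y α) x := by
    intro x; simp [dot, pd_eval hg]
  simp only [e1, e2]
  rw [integral_finset_sum _ fun α _ =>
        nice_mul_integrable (nice_pd (nice_eval hf α) k) (nice_eval hg α),
      integral_finset_sum _ fun α _ =>
        nice_mul_integrable (nice_eval hf α) (nice_pd (nice_eval hg α) k),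
      ← Finset.sum_neg_distrib]
  exact Finset.sum_congr rfl fun α _ =>
    ibp_scalar (nice_eval hf α) (nice_eval hg α) k

lemma dot_comm {v w : Fin n → ℝ} : dot v w = dot w v := by
  simp [dot, mul_comm]

lemma dot_lap_left {f : (Fin m → ℝ) → Fin n → ℝ} (x : Fin m → ℝ) (w : Fin n → ℝ) :
    dot (lap f x) w = -∑ k, dot (pd k (pd k f) x) w := by
  simp only [lap, dot, ← Finset.sum_neg_distrib]
  rw [Finset.sum_comm]
  refine Finset.sum_congr rfl fun α _ => ?_
  simp [Finset.sum_apply, Finset.sum_mul, neg_mul]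

lemma lap_dot {f g : (Fin m → ℝ) → Fin n → ℝ} (hf : Nice f) (hg : Nice g) :
    ∫ x, ∑ k, dot (pd k f x) (pd k g x) = ∫ x, dot (lap f x) (g x) := by
  rw [integral_finset_sum _ fun k _ =>
      nice_dot_integrable (nice_pd hf k) (nice_pd hg k)]
  have h1 : ∀ k : Fin m, ∫ x, dot (pd k f x) (pd k g x)
      = - ∫ x, dot (pd k (pd k f) x) (g x) := by
    intro k
    have := ibp_dot (nice_pd hf k) hg k
    linarith
  calc ∑ k, ∫ x, dot (pd k f x) (pd k g x)
      = ∑ k, -∫ x, dot (pd k (pd k f) x) (g x) := Finset.sum_congr rfl fun k _ => h1 k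
    _ = -∑ k, ∫ x, dot (pd k (pd k f) x) (g x) := by rw [Finset.sum_neg_distrib]
    _ = -∫ x, ∑ k, dot (pd k (pd k f) x) (g x) := by
        rw [integral_finset_sum _ fun k _ =>
          nice_dot_integrable (nice_pd (nice_pd hf k) k) hg]
    _ = ∫ x, -∑ k, dot (pd k (pd k f) x) (g x) := (integral_neg _).symm
    _ = ∫ x, dot (lap f x) (g x) := by
        congr 1; funext x; rw [dot_lap_left]

lemma lap_dot' {f g : (Fin m → ℝ) → Fin n → ℝ} (hf : Nice f) (hg : Nice g) :
    ∫ x, ∑ k, dot (pd k f x) (pd k g x) = ∫ x, dot (f x) (lap g x) := by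
  have e : (fun x => ∑ k, dot (pd k f x) (pd k g x))
      = fun x => ∑ k, dot (pd k g x) (pd k f x) :=
    funext fun x => Finset.sum_congr rfl fun k _ => dot_comm
  rw [e, lap_dot hg hf]
  congr 1; funext x; exact dot_comm

lemma shift {u : (Fin m → ℝ) → Fin n → ℝ} (hu : Nice u) :
    ∀ a b : ℕ, ∫ x, dot (lap^[a] u x) (lap^[b] u x) = ∫ x, dot (u x) (lap^[a + b] u x) := by
  intro a
  induction a with
  | zero => intro b; simp
  | succ a ih =>
    intro b
    have e1 : lap^[a + 1] u = lap (lap^[a] u) := Function.iterate_succ_apply' lap a u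
    have e2 : lap^[b + 1] u = lap (lap^[b] u) := Function.iterate_succ_apply' lap b u
    calc ∫ x, dot (lap^[a+1] u x) (lap^[b] u x)
        = ∫ x, ∑ k, dot (pd k (lap^[a] u) x) (pd k (lap^[b] u) x) := by
          rw [e1, ← lap_dot (nice_lap_iter hu a) (nice_lap_iter hu b)]
      _ = ∫ x, dot (lap^[a] u x) (lap^[b+1] u x) := by
          rw [e2, lap_dot' (nice_lap_iter hu a) (nice_lap_iter hu b)]
      _ = ∫ x, dot (u x) (lap^[a + (b+1)] u x) := ih (b + 1)
      _ = ∫ x, dot (u x) (lap^[a + 1 + b] u x) := by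
          have : a + (b + 1) = a + 1 + b := by omega
          rw [this]

end TraceAux

open TraceAux in
/-- Integrated trace of the odd-order stress-energy tensor in flat space:
`∫ tr S_{2s+1} = (m/2 - 2s - 1) ∫ |∇Δ^{s-1}τ|²`, where `τ = Δφ` is the tension field. -/
theorem integral_trace_S_odd {m n : ℕ} (φ : (Fin m → ℝ) → Fin n → ℝ)
    (hφ : ContDiff ℝ (⊤ : ℕ∞) φ) (hsupp : HasCompactSupport φ)
    (s : ℕ) (hs : 1 ≤ s) :
    (∫ x,
      ((m : ℝ) / 2 - 1) *
          ∑ k, dot (pd k (lap^[s - 1] (tension φ)) x) (pd k (lap^[s - 1] (tension φ)) x)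
      + (2 - (m : ℝ)) *
          ∑ k, dot (pd k φ x) (pd k (lap^[2 * s - 1] (tension φ)) x)
      - (m : ℝ) * dot (tension φ x) (lap^[2 * s - 1] (tension φ) x)
      - (m : ℝ) * ∑ l ∈ Finset.Icc 1 (s - 1),
          dot (lap^[s - l] (tension φ) x) (lap^[s + l - 1] (tension φ) x)
      + ((m : ℝ) - 2) * ∑ l ∈ Finset.Icc 1 (s - 1), ∑ k,
          dot (pd k (lap^[s - l - 1] (tension φ)) x)
              (pd k (lap^[s + l - 1] (tension φ)) x))
    = ((m : ℝ) / 2 - 2 * s - 1) *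
        ∫ x, ∑ k, dot (pd k (lap^[s - 1] (tension φ)) x)
            (pd k (lap^[s - 1] (tension φ)) x) := by
  have hΦ : Nice φ := ⟨hφ, hsupp⟩
  set T := tension φ with hTdef
  have hT : Nice T := nice_tension hΦ
  set C := ∫ x, dot (T x) (lap^[2 * s - 1] T x) with hCdef
  -- all the Laplacian-power pairings with total exponent 2s-1 equal C
  have key : ∀ a b : ℕ, a + b = 2 * s - 1 →
      ∫ x, dot (lap^[a] T x) (lap^[b] T x) = C := by
    intro a b hab
    rw [shift hT a b, hab]
  -- key with a gradient on each side
  have keyg : ∀ a b : ℕ, a + 1 + b = 2 * s - 1 →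
      ∫ x, ∑ k, dot (pd k (lap^[a] T) x) (pd k (lap^[b] T) x) = C := by
    intro a b hab
    rw [lap_dot (nice_lap_iter hT a) (nice_lap_iter hT b),
      ← Function.iterate_succ_apply' lap a T]
    exact key (a + 1) b hab
  -- the five integrals
  have F1 : ∫ x, ∑ k, dot (pd k (lap^[s - 1] T) x) (pd k (lap^[s - 1] T) x) = C :=
    keyg (s - 1) (s - 1) (by omega)
  have F2 : ∫ x, ∑ k, dot (pd k φ x) (pd k (lap^[2 * s - 1] T) x) = -C := by
    rw [lap_dot hΦ (nice_lap_iter hT (2 * s - 1))]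
    have e : ∀ x, dot (lap φ x) (lap^[2 * s - 1] T x)
        = -dot (T x) (lap^[2 * s - 1] T x) := by
      intro x
      have : lap φ x = -(T x) := by simp [lap, hTdef, tension]
      rw [this]; simp [dot, neg_mul]
    simp only [e]
    rw [integral_neg, hCdef]
  have F4 : ∀ l ∈ Finset.Icc 1 (s - 1),
      ∫ x, dot (lap^[s - l] T x) (lap^[s + l - 1] T x) = C := by
    intro l hl
    rw [Finset.mem_Icc] at hl
    exact key (s - l) (s + l - 1) (by omega)
  have F5 : ∀ l ∈ Finset.Icc 1 (s - 1),
      ∫ x, ∑ k, dot (pd k (lap^[s - l - 1] T) x) (pd k (lap^[s + l - 1] T) x) = C := by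
    intro l hl
    rw [Finset.mem_Icc] at hl
    exact keyg (s - l - 1) (s + l - 1) (by omega)
  -- integrability of the five summands
  have i1 : Integrable (fun x => ∑ k, dot (pd k (lap^[s - 1] T) x) (pd k (lap^[s - 1] T) x)) :=
    integrable_finset_sum _ fun k _ =>
      nice_dot_integrable (nice_pd (nice_lap_iter hT _) k) (nice_pd (nice_lap_iter hT _) k)
  have i2 : Integrable (fun x => ∑ k, dot (pd k φ x) (pd k (lap^[2 * s - 1] T) x)) :=
    integrable_finset_sum _ fun k _ =>
      nice_dot_integrable (nice_pd hΦ k) (nice_pd (nice_lap_iter hT _) k)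
  have i3 : Integrable (fun x => dot (T x) (lap^[2 * s - 1] T x)) :=
    nice_dot_integrable hT (nice_lap_iter hT _)
  have i4 : Integrable (fun x => ∑ l ∈ Finset.Icc 1 (s - 1),
      dot (lap^[s - l] T x) (lap^[s + l - 1] T x)) :=
    integrable_finset_sum _ fun l _ =>
      nice_dot_integrable (nice_lap_iter hT _) (nice_lap_iter hT _)
  have i5 : Integrable (fun x => ∑ l ∈ Finset.Icc 1 (s - 1), ∑ k,
      dot (pd k (lap^[s - l - 1] T) x) (pd k (lap^[s + l - 1] T) x)) :=
    integrable_finset_sum _ fun l _ => integrable_finset_sum _ fun k _ =>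
      nice_dot_integrable (nice_pd (nice_lap_iter hT _) k) (nice_pd (nice_lap_iter hT _) k)
  -- split the big integral
  have j1 : Integrable (fun x => ((m : ℝ) / 2 - 1) *
      ∑ k, dot (pd k (lap^[s - 1] T) x) (pd k (lap^[s - 1] T) x)) := i1.const_mul _
  have j2 : Integrable (fun x => (2 - (m : ℝ)) *
      ∑ k, dot (pd k φ x) (pd k (lap^[2 * s - 1] T) x)) := i2.const_mul _
  have j3 : Integrable (fun x => (m : ℝ) * dot (T x) (lap^[2 * s - 1] T x)) := i3.const_mul _
  have j4 : Integrable (fun x => (m : ℝ) * ∑ l ∈ Finset.Icc 1 (s - 1),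
      dot (lap^[s - l] T x) (lap^[s + l - 1] T x)) := i4.const_mul _
  have j5 : Integrable (fun x => ((m : ℝ) - 2) * ∑ l ∈ Finset.Icc 1 (s - 1), ∑ k,
      dot (pd k (lap^[s - l - 1] T) x) (pd k (lap^[s + l - 1] T) x)) := i5.const_mul _
  have j12 : Integrable (fun x => ((m : ℝ) / 2 - 1) *
      (∑ k, dot (pd k (lap^[s - 1] T) x) (pd k (lap^[s - 1] T) x)) + (2 - (m : ℝ)) *
      ∑ k, dot (pd k φ x) (pd k (lap^[2 * s - 1] T) x)) := j1.add j2
  have j123 : Integrable (fun x => ((m : ℝ) / 2 - 1) *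
      (∑ k, dot (pd k (lap^[s - 1] T) x) (pd k (lap^[s - 1] T) x)) + (2 - (m : ℝ)) *
      (∑ k, dot (pd k φ x) (pd k (lap^[2 * s - 1] T) x))
      - (m : ℝ) * dot (T x) (lap^[2 * s - 1] T x)) := j12.sub j3
  have j1234 : Integrable (fun x => ((m : ℝ) / 2 - 1) *
      (∑ k, dot (pd k (lap^[s - 1] T) x) (pd k (lap^[s - 1] T) x)) + (2 - (m : ℝ)) *
      (∑ k, dot (pd k φ x) (pd k (lap^[2 * s - 1] T) x))
      - (m : ℝ) * dot (T x) (lap^[2 * s - 1] T x)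
      - (m : ℝ) * ∑ l ∈ Finset.Icc 1 (s - 1),
          dot (lap^[s - l] T x) (lap^[s + l - 1] T x)) := j123.sub j4
  rw [integral_add j1234 j5, integral_sub j123 j4, integral_sub j12 j3, integral_add j1 j2,
     integral_const_mul, integral_const_mul, integral_const_mul, integral_const_mul,
     integral_const_mul]
  -- evaluate the sums over l
  have E4 : ∫ x, ∑ l ∈ Finset.Icc 1 (s - 1),
      dot (lap^[s - l] T x) (lap^[s + l - 1] T x) = ((s : ℝ) - 1) * C := by
    rw [integral_finset_sum _ fun l _ =>
        nice_dot_integrable (nice_lap_iter hT _) (nice_lap_iter hT _),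
      Finset.sum_congr rfl F4, Finset.sum_const, Nat.card_Icc]
    have : ((s - 1 + 1 - 1 : ℕ) : ℝ) = (s : ℝ) - 1 := by
      have h : s - 1 + 1 - 1 = s - 1 := by omega
      rw [h, Nat.cast_sub hs, Nat.cast_one]
    rw [nsmul_eq_mul, this]
  have E5 : ∫ x, ∑ l ∈ Finset.Icc 1 (s - 1), ∑ k,
      dot (pd k (lap^[s - l - 1] T) x) (pd k (lap^[s + l - 1] T) x) = ((s : ℝ) - 1) * C := by
    rw [integral_finset_sum _ fun l _ => integrable_finset_sum _ fun k _ =>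
        nice_dot_integrable (nice_pd (nice_lap_iter hT _) k) (nice_pd (nice_lap_iter hT _) k),
      Finset.sum_congr rfl F5, Finset.sum_const, Nat.card_Icc]
    have : ((s - 1 + 1 - 1 : ℕ) : ℝ) = (s : ℝ) - 1 := by
      have h : s - 1 + 1 - 1 = s - 1 := by omega
      rw [h, Nat.cast_sub hs, Nat.cast_one]
    rw [nsmul_eq_mul, this]
  rw [F1, F2, E4, E5, hCdef]
  ring
end
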